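/- arXiv:2102.02388 — 5 statements merged into one kernel-verified Lean document; each statement's English description precedes it below -/
import Mathlib

section
/- The supremum of Var(T) over random variables T taking values in [0,1] satisfying E[T] ≤ α₁ and E[T²] ≤ α₂ equals p*(1 − p*), where p* := min{α₁, α₂, 1/2}. -/
open MeasureTheory

lemma aux_ub (α₁ α₂ s m : ℝ) (hs0 : 0 ≤ s) (hsm : s ≤ m) (hm : m ≤ α₁) (hs : s ≤ α₂) :
    s - m ^ 2 ≤ min (min α₁ α₂) (1/2) * (1 - min (min α₁ α₂) (1/2)) := by
  have hsmin : s ≤ min α₁ α₂ := le_min (hsm.trans hm) hs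
  have hm2 : s ^ 2 ≤ m ^ 2 := by nlinarith
  rcases min_cases (min α₁ α₂) (1/2) with ⟨h1, h2⟩ | ⟨h1, h2⟩ <;> rw [h1]
  · nlinarith [mul_nonneg (sub_nonneg.2 hsmin) (by linarith : (0:ℝ) ≤ 1 - (min α₁ α₂) - s)]
  · nlinarith [sq_nonneg (s - 1/2)]

lemma fin_smul_dirac {Ω : Type} [MeasurableSpace Ω] (x : Ω) (c : ℝ) :
    IsFiniteMeasure ((ENNReal.ofReal c) • Measure.dirac x) := by
  constructor
  simp [Measure.smul_apply]

lemma bern_mem (p : ℝ) (hp0 : 0 ≤ p) (hp1 : p ≤ 1) :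
    ∃ (Ω : Type) (_ : MeasurableSpace Ω) (μ : Measure Ω)
        (_ : IsProbabilityMeasure μ) (T : Ω → ℝ), Measurable T ∧
        (∀ᵐ ω ∂μ, T ω ∈ Set.Icc 0 1) ∧
        (∫ ω, T ω ∂μ) = p ∧ (∫ ω, (T ω) ^ 2 ∂μ) = p := by
  classical
  have hF1 := fin_smul_dirac (Ω := Bool) true p
  have hF2 := fin_smul_dirac (Ω := Bool) false (1 - p)
  have hi1 : Integrable (fun b : Bool => if b then (1:ℝ) else 0)
      ((ENNReal.ofReal p) • Measure.dirac true) := Integrable.of_finite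
  have hi2 : Integrable (fun b : Bool => if b then (1:ℝ) else 0)
      ((ENNReal.ofReal (1 - p)) • Measure.dirac false) := Integrable.of_finite
  have heq : (fun b : Bool => (if b then (1:ℝ) else 0) ^ 2) = (fun b => if b then 1 else 0) := by
    funext b; by_cases hb : b <;> simp [hb]
  have hint : ∫ b, (if b then (1:ℝ) else 0)
      ∂((ENNReal.ofReal p) • Measure.dirac true + (ENNReal.ofReal (1 - p)) • Measure.dirac false) = p := by
    rw [integral_add_measure hi1 hi2, integral_smul_measure, integral_smul_measure,
      integral_dirac, integral_dirac]
    simp [ENNReal.toReal_ofReal hp0]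
  refine ⟨Bool, inferInstance,
    (ENNReal.ofReal p) • Measure.dirac true + (ENNReal.ofReal (1 - p)) • Measure.dirac false,
    ?_, fun b => if b then 1 else 0, measurable_of_countable _, ?_, hint, ?_⟩
  · constructor
    simp [Measure.add_apply, Measure.smul_apply, ← ENNReal.ofReal_add hp0 (by linarith : (0:ℝ) ≤ 1 - p)]
  · filter_upwards with b
    by_cases hb : b <;> simp [hb]
  · calc ∫ b, (if b then (1:ℝ) else 0) ^ 2
        ∂((ENNReal.ofReal p) • Measure.dirac true + (ENNReal.ofReal (1 - p)) • Measure.dirac false)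
        = ∫ b, (if b then (1:ℝ) else 0)
        ∂((ENNReal.ofReal p) • Measure.dirac true + (ENNReal.ofReal (1 - p)) • Measure.dirac false) := by
          rw [heq]
      _ = p := hint

theorem stmt3 (α₁ α₂ : ℝ) (hα₁ : 0 < α₁) (hα₂ : 0 < α₂) :
    sSup {v : ℝ | ∃ (Ω : Type) (_ : MeasurableSpace Ω) (μ : Measure Ω)
        (_ : IsProbabilityMeasure μ) (T : Ω → ℝ), Measurable T ∧
        (∀ᵐ ω ∂μ, T ω ∈ Set.Icc 0 1) ∧
        (∫ ω, T ω ∂μ) ≤ α₁ ∧ (∫ ω, (T ω) ^ 2 ∂μ) ≤ α₂ ∧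
        v = (∫ ω, (T ω) ^ 2 ∂μ) - (∫ ω, T ω ∂μ) ^ 2} =
      min (min α₁ α₂) (1 / 2) * (1 - min (min α₁ α₂) (1 / 2)) := by
  set p := min (min α₁ α₂) (1 / 2) with hpdef
  have hp0 : 0 ≤ p := le_min (le_min hα₁.le hα₂.le) (by norm_num)
  have hp1 : p ≤ 1 := (min_le_right _ _).trans (by norm_num)
  have hub : ∀ v ∈ {v : ℝ | ∃ (Ω : Type) (_ : MeasurableSpace Ω) (μ : Measure Ω)
        (_ : IsProbabilityMeasure μ) (T : Ω → ℝ), Measurable T ∧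
        (∀ᵐ ω ∂μ, T ω ∈ Set.Icc 0 1) ∧
        (∫ ω, T ω ∂μ) ≤ α₁ ∧ (∫ ω, (T ω) ^ 2 ∂μ) ≤ α₂ ∧
        v = (∫ ω, (T ω) ^ 2 ∂μ) - (∫ ω, T ω ∂μ) ^ 2}, v ≤ p * (1 - p) := by
    rintro v ⟨Ω, mΩ, μ, hprob, T, hT, hae, h1, h2, hv⟩
    have hb : ∀ᵐ ω ∂μ, ‖T ω‖ ≤ 1 := hae.mono fun ω h => by
      rw [Real.norm_eq_abs, abs_le]; exact ⟨by linarith [h.1], h.2⟩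
    have hInt : Integrable T μ :=
      (integrable_const (1 : ℝ)).mono' hT.aestronglyMeasurable hb
    have hb2 : ∀ᵐ ω ∂μ, ‖(T ω) ^ 2‖ ≤ 1 := hae.mono fun ω h => by
      rw [Real.norm_eq_abs, abs_le]; constructor <;> nlinarith [h.1, h.2]
    have hInt2 : Integrable (fun ω => (T ω) ^ 2) μ :=
      (integrable_const (1 : ℝ)).mono' (hT.pow_const 2).aestronglyMeasurable hb2
    have hnn : 0 ≤ ∫ ω, (T ω) ^ 2 ∂μ := integral_nonneg fun ω => sq_nonneg _
    have hmono : (∫ ω, (T ω) ^ 2 ∂μ) ≤ ∫ ω, T ω ∂μ :=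
      integral_mono_ae hInt2 hInt (hae.mono fun ω h => by
        show T ω ^ 2 ≤ T ω; nlinarith [h.1, h.2])
    rw [hv]
    exact aux_ub α₁ α₂ _ _ hnn hmono h1 h2
  have hmem : p * (1 - p) ∈ {v : ℝ | ∃ (Ω : Type) (_ : MeasurableSpace Ω) (μ : Measure Ω)
        (_ : IsProbabilityMeasure μ) (T : Ω → ℝ), Measurable T ∧
        (∀ᵐ ω ∂μ, T ω ∈ Set.Icc 0 1) ∧
        (∫ ω, T ω ∂μ) ≤ α₁ ∧ (∫ ω, (T ω) ^ 2 ∂μ) ≤ α₂ ∧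
        v = (∫ ω, (T ω) ^ 2 ∂μ) - (∫ ω, T ω ∂μ) ^ 2} := by
    obtain ⟨Ω, mΩ, μ, hprob, T, hT, hae, hm1, hm2⟩ := bern_mem p hp0 hp1
    have hpa : p ≤ α₁ := (min_le_left _ _).trans (min_le_left _ _)
    have hpb : p ≤ α₂ := (min_le_left _ _).trans (min_le_right _ _)
    exact ⟨Ω, mΩ, μ, hprob, T, hT, hae, hm1 ▸ hpa, hm2 ▸ hpb, by rw [hm1, hm2]; ring⟩
  exact le_antisymm (csSup_le ⟨_, hmem⟩ hub) (le_csSup ⟨_, hub⟩ hmem)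
end

section
/- The function Γ(λ₁, λ₂) := log ζ₀(λ₁,λ₂) + λ₁α₁ + λ₂α₂ is strictly convex on [0,∞)², for any fixed α₁, α₂ > 0. -/
noncomputable def zeta (i : ℕ) (l1 l2 : ℝ) : ℝ :=
  ∫ y in (0:ℝ)..1, y ^ i * Real.exp (-l1 * y - l2 * y ^ 2)

/-!
Hölder's inequality, in the form of strict convexity of `exp`: after normalising `e^f` and `e^g`
to probability densities, `e^(s f + t g) ≤ s e^f + t e^g` pointwise, strictly where `f ≠ g`.
Hence the log-partition function `p ↦ log ∫ exp (φ p)` of a linear family `φ` is strictly convex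
as soon as no nonzero `φ p` is almost everywhere constant, which holds for `φ p y = -p₁ y - p₂ y²`
on `(0, 1]`. Adding the linear term `p₁ α₁ + p₂ α₂` preserves strict convexity.
-/

open MeasureTheory Set Real

section LogIntegralExp

variable {α : Type*} [MeasurableSpace α] {μ : Measure α} {f g : α → ℝ} {s t : ℝ}

lemma integrable_exp_convexComb (hf : Integrable (fun x => exp (f x)) μ)
    (hg : Integrable (fun x => exp (g x)) μ) (hs : 0 ≤ s) (ht : 0 ≤ t) (hst : s + t = 1) :
    Integrable (fun x => exp (s * f x + t * g x)) μ := by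
  have hfm : AEMeasurable f μ :=
    (measurable_log.comp_aemeasurable hf.aemeasurable).congr
      (Filter.Eventually.of_forall fun x => log_exp (f x))
  have hgm : AEMeasurable g μ :=
    (measurable_log.comp_aemeasurable hg.aemeasurable).congr
      (Filter.Eventually.of_forall fun x => log_exp (g x))
  refine ((hf.const_mul s).add (hg.const_mul t)).mono'
    (measurable_exp.comp_aemeasurable ((hfm.const_mul s).add (hgm.const_mul t))).aestronglyMeasurable
    (Filter.Eventually.of_forall fun x => ?_)
  rw [norm_of_nonneg (exp_pos _).le]
  exact convexOn_exp.2 (mem_univ _) (mem_univ _) hs ht hst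

lemma integral_exp_convexComb_lt_one (hf : Integrable (fun x => exp (f x)) μ)
    (hg : Integrable (fun x => exp (g x)) μ) (hf1 : ∫ x, exp (f x) ∂μ = 1)
    (hg1 : ∫ x, exp (g x) ∂μ = 1) (hfg : ¬ f =ᵐ[μ] g) (hs : 0 < s) (ht : 0 < t)
    (hst : s + t = 1) :
    ∫ x, exp (s * f x + t * g x) ∂μ < 1 := by
  set D : α → ℝ := fun x => s * exp (f x) + t * exp (g x) - exp (s * f x + t * g x)
  have hD_nonneg : ∀ x, 0 ≤ D x := fun x =>
    sub_nonneg.2 (convexOn_exp.2 (mem_univ _) (mem_univ _) hs.le ht.le hst)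
  have hD_pos : ∀ x, f x ≠ g x → 0 < D x := fun x hx =>
    sub_pos.2 (strictConvexOn_exp.2 (mem_univ _) (mem_univ _) hx hs ht hst)
  have hsum : Integrable (fun x => s * exp (f x) + t * exp (g x)) μ :=
    (hf.const_mul s).add (hg.const_mul t)
  have hcomb := integrable_exp_convexComb hf hg hs.le ht.le hst
  have hD_integral : 0 < ∫ x, D x ∂μ := by
    rw [integral_pos_iff_support_of_nonneg hD_nonneg (hsum.sub hcomb)]
    have hne : μ {x | f x ≠ g x} ≠ 0 := fun h => hfg (ae_iff.2 h)
    exact (pos_iff_ne_zero.2 hne).trans_le (measure_mono fun x hx => (hD_pos x hx).ne')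
  have hD_eq : ∫ x, D x ∂μ = 1 - ∫ x, exp (s * f x + t * g x) ∂μ := by
    rw [integral_sub hsum hcomb, integral_add (hf.const_mul s) (hg.const_mul t),
      integral_const_mul, integral_const_mul, hf1, hg1, mul_one, mul_one, hst]
  linarith

theorem log_integral_exp_convexComb_lt (hf : Integrable (fun x => exp (f x)) μ)
    (hg : Integrable (fun x => exp (g x)) μ) (hfg : ∀ c, ¬ ∀ᵐ x ∂μ, f x = g x + c)
    (hs : 0 < s) (ht : 0 < t) (hst : s + t = 1) :
    log (∫ x, exp (s * f x + t * g x) ∂μ) <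
      s * log (∫ x, exp (f x) ∂μ) + t * log (∫ x, exp (g x) ∂μ) := by
  have : NeZero μ := ⟨fun h => hfg 0 (by simp [h])⟩
  set Zf := ∫ x, exp (f x) ∂μ
  set Zg := ∫ x, exp (g x) ∂μ
  have hZf : 0 < Zf := integral_exp_pos hf
  have hZg : 0 < Zg := integral_exp_pos hg
  have normalize : ∀ {h : α → ℝ} {Z : ℝ}, 0 < Z →
      (fun x => exp (h x - log Z)) = fun x => exp (h x) / Z := fun hZ => by
    ext x; rw [exp_sub, exp_log hZ]
  have hF := normalize (h := f) hZf
  have hG := normalize (h := g) hZg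
  have key := integral_exp_convexComb_lt_one (μ := μ) (f := fun x => f x - log Zf)
    (g := fun x => g x - log Zg) (by rw [hF]; exact hf.div_const _)
    (by rw [hG]; exact hg.div_const _) (by rw [hF, integral_div, div_self hZf.ne'])
    (by rw [hG, integral_div, div_self hZg.ne'])
    (fun h => hfg (log Zf - log Zg) (h.mono fun x hx => by linarith)) hs ht hst
  have hshift : ∀ x, exp (s * (f x - log Zf) + t * (g x - log Zg)) =
      exp (s * f x + t * g x) / exp (s * log Zf + t * log Zg) := fun x => by
    rw [← exp_sub]; ring_nf
  simp only [hshift, integral_div] at key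
  rw [div_lt_one (exp_pos _), ← log_lt_iff_lt_exp
    (integral_exp_pos (integrable_exp_convexComb hf hg hs.le ht.le hst))] at key
  exact key

theorem strictConvexOn_log_integral_exp {E : Type*} [AddCommGroup E] [Module ℝ E]
    (φ : E →ₗ[ℝ] α → ℝ) (hφ : ∀ p, Integrable (fun x => exp (φ p x)) μ)
    (hφ_nondeg : ∀ p ≠ 0, ∀ c, ¬ ∀ᵐ x ∂μ, φ p x = c) :
    StrictConvexOn ℝ univ fun p => log (∫ x, exp (φ p x) ∂μ) := by
  refine ⟨convex_univ, fun p _ q _ hpq s t hs ht hst => ?_⟩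
  have hnondeg : ∀ c, ¬ ∀ᵐ x ∂μ, φ p x = φ q x + c := fun c h =>
    hφ_nondeg (p - q) (sub_ne_zero.2 hpq) c
      (h.mono fun x hx => by rw [map_sub, Pi.sub_apply, hx, add_sub_cancel_left])
  simpa only [map_add, map_smul, Pi.add_apply, Pi.smul_apply, smul_eq_mul] using
    log_integral_exp_convexComb_lt (hφ p) (hφ q) hnondeg hs ht hst

end LogIntegralExp

def quadExponent : ℝ × ℝ →ₗ[ℝ] ℝ → ℝ where
  toFun p y := -p.1 * y - p.2 * y ^ 2
  map_add' p q := by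
    ext y
    simp only [Prod.fst_add, Prod.snd_add, Pi.add_apply]
    ring
  map_smul' c p := by
    ext y
    simp only [Prod.smul_fst, Prod.smul_snd, smul_eq_mul, RingHom.id_apply, Pi.smul_apply]
    ring

lemma continuous_quadExponent (p : ℝ × ℝ) : Continuous (quadExponent p) := by
  change Continuous fun y : ℝ => -p.1 * y - p.2 * y ^ 2
  fun_prop

lemma eq_zero_of_ae_quadExponent_eq_const {p : ℝ × ℝ} {c : ℝ}
    (h : ∀ᵐ y ∂volume.restrict (Ioc (0:ℝ) 1), quadExponent p y = c) : p = 0 := by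
  have hEq : EqOn (quadExponent p) (fun _ => c) (Ioo 0 1) :=
    Measure.eqOn_open_of_ae_eq (ae_restrict_of_ae_restrict_of_subset Ioo_subset_Ioc_self h)
      isOpen_Ioo (continuous_quadExponent p).continuousOn continuousOn_const
  have h₁ := hEq (show (1/4 : ℝ) ∈ Ioo 0 1 by norm_num)
  have h₂ := hEq (show (1/2 : ℝ) ∈ Ioo 0 1 by norm_num)
  have h₃ := hEq (show (3/4 : ℝ) ∈ Ioo 0 1 by norm_num)
  simp only [quadExponent, LinearMap.coe_mk, AddHom.coe_mk] at h₁ h₂ h₃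
  ext <;> simp only [Prod.fst_zero, Prod.snd_zero] <;> linarith

lemma zeta_zero_eq_integral_exp_quadExponent (p : ℝ × ℝ) :
    zeta 0 p.1 p.2 = ∫ y in Ioc (0:ℝ) 1, exp (quadExponent p y) := by
  rw [zeta, intervalIntegral.integral_of_le zero_le_one]
  simp only [pow_zero, one_mul]
  rfl

theorem stmt8_general (α₁ α₂ : ℝ) :
    StrictConvexOn ℝ (Set.Ici (0:ℝ) ×ˢ Set.Ici (0:ℝ))
      (fun p : ℝ × ℝ => Real.log (zeta 0 p.1 p.2) + p.1 * α₁ + p.2 * α₂) := by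
  have hquadrant : Convex ℝ (Ici (0:ℝ) ×ˢ Ici (0:ℝ)) := (convex_Ici 0).prod (convex_Ici 0)
  have hlogZ : StrictConvexOn ℝ univ
      fun p : ℝ × ℝ => log (∫ y in Ioc (0:ℝ) 1, exp (quadExponent p y)) :=
    strictConvexOn_log_integral_exp quadExponent
      (fun p => (continuous_exp.comp (continuous_quadExponent p)).integrableOn_Ioc)
      (fun p hp c h => hp (eq_zero_of_ae_quadExponent_eq_const h))
  have hlinear : ConvexOn ℝ (Ici (0:ℝ) ×ˢ Ici (0:ℝ)) fun p : ℝ × ℝ => p.1 * α₁ + p.2 * α₂ :=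
    ((LinearMap.fst ℝ ℝ ℝ).smulRight α₁ + (LinearMap.snd ℝ ℝ ℝ).smulRight α₂).convexOn hquadrant
  simp_rw [zeta_zero_eq_integral_exp_quadExponent, add_assoc]
  exact (hlogZ.subset (subset_univ _) hquadrant).add_convexOn hlinear

theorem stmt8 (α₁ α₂ : ℝ) (hα₁ : 0 < α₁) (hα₂ : 0 < α₂) :
    StrictConvexOn ℝ (Set.Ici (0:ℝ) ×ˢ Set.Ici (0:ℝ))
      (fun p : ℝ × ℝ => Real.log (zeta 0 p.1 p.2) + p.1 * α₁ + p.2 * α₂) :=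
  stmt8_general α₁ α₂
end

section
/- The function λ₁ ↦ 1/λ₁ − e^{−λ₁}/(1 − e^{−λ₁}) is strictly decreasing on (0,∞), tends to 1/2 as λ₁ → 0⁺, and tends to 0 as λ₁ → ∞; hence for every α₁ ∈ (0, 1/2) the equation 1/λ₁ − e^{−λ₁}/(1 − e^{−λ₁}) = α₁ has a unique positive solution. -/
/-!
Write `g(λ) = 1/λ - 1/(e^λ - 1)`. Since `(e^λ - 1)² = e^λ (2 sinh (λ/2))²` and `|y| < |sinh y|`
for `y ≠ 0`, we get `λ² e^λ < (e^λ - 1)²`, which is exactly `g'(λ) < 0`. Near `0` the factorisation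
`g(λ) = (e^λ - 1 - λ)/λ² · λ/(e^λ - 1)` gives the limit `1/2 · 1`, and at `∞` both terms of `g`
vanish. A continuous strictly decreasing function takes every value between its two end limits
exactly once.
-/

open Real Set Filter Topology

noncomputable def truncExpMean (l : ℝ) : ℝ := l⁻¹ - (exp l - 1)⁻¹

lemma exp_neg_div_one_sub_exp_neg (x : ℝ) : exp (-x) / (1 - exp (-x)) = (exp x - 1)⁻¹ := by
  rw [← mul_div_mul_right _ _ (exp_pos x).ne', sub_mul, ← exp_add, neg_add_cancel, exp_zero,
    one_mul, one_div]

lemma one_div_sub_exp_neg_div_eq_truncExpMean (x : ℝ) :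
    1 / x - exp (-x) / (1 - exp (-x)) = truncExpMean x := by
  rw [truncExpMean, one_div, exp_neg_div_one_sub_exp_neg]

lemma exp_sub_one_ne_zero {x : ℝ} (hx : x ≠ 0) : exp x - 1 ≠ 0 :=
  sub_ne_zero.mpr ((exp_eq_one_iff x).not.mpr hx)

lemma sq_mul_exp_lt_sq_exp_sub_one {x : ℝ} (hx : x ≠ 0) : x ^ 2 * exp x < (exp x - 1) ^ 2 := by
  have hsinh : |x| < |2 * sinh (x / 2)| := by
    rw [abs_mul, abs_sinh, abs_two, abs_div, abs_two]
    linarith [self_lt_sinh_iff.mpr (by positivity : 0 < |x| / 2)]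
  have hsq : (exp x - 1) ^ 2 = (2 * sinh (x / 2)) ^ 2 * exp x := by
    have hhalf : exp x = exp (x / 2) ^ 2 := by rw [← exp_nat_mul]; ring_nf
    rw [sinh_eq, exp_neg, hhalf]
    field_simp
  rw [hsq]
  exact mul_lt_mul_of_pos_right (sq_lt_sq.mpr hsinh) (exp_pos x)

lemma hasDerivAt_truncExpMean {x : ℝ} (hx : x ≠ 0) :
    HasDerivAt truncExpMean (-(x ^ 2)⁻¹ + exp x / (exp x - 1) ^ 2) x := by
  have h := (hasDerivAt_inv hx).sub
    (((hasDerivAt_exp x).sub_const 1).inv (exp_sub_one_ne_zero hx))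
  rwa [neg_div, sub_neg_eq_add] at h

lemma deriv_truncExpMean_neg {x : ℝ} (hx : x ≠ 0) :
    -(x ^ 2)⁻¹ + exp x / (exp x - 1) ^ 2 < 0 := by
  have hexp := exp_sub_one_ne_zero hx
  rw [neg_add_lt_iff_lt_add, add_zero, div_lt_iff₀ (by positivity), inv_mul_eq_div,
    lt_div_iff₀ (by positivity), mul_comm]
  exact sq_mul_exp_lt_sq_exp_sub_one hx

lemma continuousOn_truncExpMean : ContinuousOn truncExpMean (Ioi 0) := fun _ hx =>
  (hasDerivAt_truncExpMean (ne_of_gt hx)).continuousAt.continuousWithinAt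

lemma strictAntiOn_truncExpMean : StrictAntiOn truncExpMean (Ioi 0) := by
  refine strictAntiOn_of_hasDerivWithinAt_neg (convex_Ioi 0) continuousOn_truncExpMean
    (fun x hx => (hasDerivAt_truncExpMean ?_).hasDerivWithinAt)
    (fun x hx => deriv_truncExpMean_neg ?_)
  all_goals rw [interior_Ioi] at hx; exact ne_of_gt hx

lemma tendsto_exp_sub_one_div : Tendsto (fun x => (exp x - 1) / x) (𝓝[≠] 0) (𝓝 1) := by
  simpa [div_eq_inv_mul] using (hasDerivAt_exp 0).tendsto_slope_zero

lemma tendsto_exp_sub_one_sub_div_sq :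
    Tendsto (fun x => (exp x - 1 - x) / x ^ 2) (𝓝[≠] 0) (𝓝 (1 / 2)) := by
  refine HasDerivAt.lhopital_zero_nhdsNE (f' := fun x => exp x - 1) (g' := fun x => 2 * x)
    ?_ ?_ ?_ ?_ ?_ ?_
  · exact Eventually.of_forall fun x => ((hasDerivAt_exp x).sub_const 1).sub (hasDerivAt_id x)
  · exact Eventually.of_forall fun x => by simpa using hasDerivAt_pow 2 x
  · exact eventually_nhdsWithin_of_forall fun x hx => mul_ne_zero two_ne_zero hx
  · exact (Continuous.tendsto' (by fun_prop) 0 0 (by simp)).mono_left nhdsWithin_le_nhds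
  · exact (Continuous.tendsto' (by fun_prop) 0 0 (by simp)).mono_left nhdsWithin_le_nhds
  · simpa [div_mul_eq_div_div_swap] using tendsto_exp_sub_one_div.div_const 2

lemma truncExpMean_eq_mul {x : ℝ} (hx : x ≠ 0) :
    truncExpMean x = (exp x - 1 - x) / x ^ 2 * (x / (exp x - 1)) := by
  have hexp := exp_sub_one_ne_zero hx
  rw [truncExpMean]
  field_simp

lemma tendsto_truncExpMean_nhdsNE : Tendsto truncExpMean (𝓝[≠] 0) (𝓝 (1 / 2)) := by
  have h := tendsto_exp_sub_one_sub_div_sq.mul (tendsto_exp_sub_one_div.inv₀ one_ne_zero)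
  rw [inv_one, mul_one] at h
  refine h.congr' (eventually_nhdsWithin_of_forall fun x hx => ?_)
  rw [truncExpMean_eq_mul hx, inv_div]

lemma tendsto_truncExpMean_atTop : Tendsto truncExpMean atTop (𝓝 0) := by
  have h : Tendsto (fun l => exp l - 1) atTop atTop :=
    tendsto_atTop_add_const_right _ _ tendsto_exp_atTop
  unfold truncExpMean
  simpa using tendsto_inv_atTop_zero.sub h.inv_tendsto_atTop

lemma existsUnique_eq_of_strictAntiOn_Ioi {f : ℝ → ℝ} {a b c y : ℝ}
    (hanti : StrictAntiOn f (Ioi a)) (hcont : ContinuousOn f (Ioi a))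
    (hleft : Tendsto f (𝓝[>] a) (𝓝 b)) (htop : Tendsto f atTop (𝓝 c)) (hy : y ∈ Ioo c b) :
    ∃! x, a < x ∧ f x = y := by
  obtain ⟨p, hfp, hap⟩ :=
    ((hleft.eventually (eventually_gt_nhds hy.2)).and self_mem_nhdsWithin).exists
  obtain ⟨q, hfq, hpq⟩ :=
    ((htop.eventually (eventually_lt_nhds hy.1)).and (eventually_gt_atTop p)).exists
  obtain ⟨x, hx, hfx⟩ := intermediate_value_Icc' hpq.le
    (hcont.mono fun z hz => lt_of_lt_of_le hap hz.1) ⟨hfq.le, hfp.le⟩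
  have hax : a < x := lt_of_lt_of_le hap hx.1
  exact ⟨x, ⟨hax, hfx⟩, fun z ⟨haz, hfz⟩ => hanti.injOn haz hax (hfz.trans hfx.symm)⟩

theorem stmt13 :
    StrictAntiOn (fun l : ℝ => 1 / l - Real.exp (-l) / (1 - Real.exp (-l))) (Set.Ioi 0) ∧
    Filter.Tendsto (fun l : ℝ => 1 / l - Real.exp (-l) / (1 - Real.exp (-l)))
      (nhdsWithin 0 (Set.Ioi 0)) (nhds (1 / 2)) ∧
    Filter.Tendsto (fun l : ℝ => 1 / l - Real.exp (-l) / (1 - Real.exp (-l)))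
      Filter.atTop (nhds 0) ∧
    ∀ α₁ ∈ Set.Ioo (0:ℝ) (1 / 2),
      ∃! l : ℝ, 0 < l ∧ 1 / l - Real.exp (-l) / (1 - Real.exp (-l)) = α₁ := by
  simp only [one_div_sub_exp_neg_div_eq_truncExpMean]
  have hleft : Tendsto truncExpMean (𝓝[>] 0) (𝓝 (1 / 2)) :=
    tendsto_truncExpMean_nhdsNE.mono_left (nhdsWithin_mono _ fun x hx => ne_of_gt hx)
  exact ⟨strictAntiOn_truncExpMean, hleft, tendsto_truncExpMean_atTop, fun _ hα =>
    existsUnique_eq_of_strictAntiOn_Ioi strictAntiOn_truncExpMean continuousOn_truncExpMean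
      hleft tendsto_truncExpMean_atTop hα⟩
end

section
/- For all x ≥ 0: ∫_{−∞}^{0} (1/√(2π)) e^{−(y−x)²/2} (log√(2π) + y²/2) dy = log√(2π)·Q(x) + (x²/2)Q(x) + (1/2)Q(x) − (x/2)·(1/√(2π))e^{−x²/2}, and this is at most (log√(2π) + 1/2)·Q(x). -/
open MeasureTheory

noncomputable def Qf (x : ℝ) : ℝ :=
  ∫ t in Set.Ioi x, (1 / Real.sqrt (2 * Real.pi)) * Real.exp (-t ^ 2 / 2)

/-!
With `φ` the standard normal density and `L` any constant, substituting `y = x - t` turns the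
integral into `∫_x^∞ φ(t) (L + (x - t)² / 2) dt`. Expanding the square, it remains to know the
first two moments of `φ` on `(x, ∞)`: they are `φ(x)` and `x φ(x) + Q(x)`, both by integration
by parts against `φ' = -t φ`. The inequality is then equivalent to `x² Q(x) ≤ x φ(x)`, and
`x Q(x) ≤ φ(x)` follows from `x ≤ t` under the integral.
-/

open Set Filter Real Topology

theorem integral_Ioi_eq_neg_of_hasDerivAt_of_integrableOn {E : Type*} [NormedAddCommGroup E]
    [NormedSpace ℝ E] [CompleteSpace E] {F f : ℝ → E} {a : ℝ}
    (hderiv : ∀ t ∈ Ici a, HasDerivAt F (f t) t) (hF : IntegrableOn F (Ioi a))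
    (hf : IntegrableOn f (Ioi a)) :
    ∫ t in Ioi a, f t = -F a := by
  have hlim : Tendsto F atTop (𝓝 0) :=
    tendsto_zero_of_hasDerivAt_of_integrableOn_Ioi
      (fun t ht ↦ hderiv t (Ioi_subset_Ici_self ht)) hf hF
  rw [integral_Ioi_of_hasDerivAt_of_tendsto' hderiv hf hlim, zero_sub]

theorem setIntegral_Iio_sub_eq_setIntegral_Ioi_comp_sub_left {E : Type*} [NormedAddCommGroup E]
    [NormedSpace ℝ E] (f : ℝ → E) (x a : ℝ) :
    ∫ y in Iio (x - a), f y = ∫ t in Ioi a, f (x - t) := by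
  have hpre : (fun t : ℝ ↦ x - t) ⁻¹' Iio (x - a) = Ioi a := by
    ext t
    simp only [mem_preimage, mem_Iio, mem_Ioi, sub_lt_sub_iff_left]
  rw [← (Measure.measurePreserving_sub_left volume x).setIntegral_preimage_emb
    (Homeomorph.subLeft x).measurableEmbedding f, hpre]

theorem integrable_pow_mul_exp_neg_sq_div_two (n : ℕ) :
    Integrable fun t : ℝ ↦ t ^ n * exp (-t ^ 2 / 2) := by
  have h := integrable_rpow_mul_exp_neg_mul_sq (b := 1 / 2) (by norm_num) (s := n)
    (by linarith [n.cast_nonneg (α := ℝ)])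
  simp only [rpow_natCast] at h
  convert h using 4
  ring

theorem integrable_exp_neg_sq_div_two : Integrable fun t : ℝ ↦ exp (-t ^ 2 / 2) := by
  simpa using integrable_pow_mul_exp_neg_sq_div_two 0

theorem integrable_mul_exp_neg_sq_div_two : Integrable fun t : ℝ ↦ t * exp (-t ^ 2 / 2) := by
  simpa using integrable_pow_mul_exp_neg_sq_div_two 1

theorem hasDerivAt_exp_neg_sq_div_two (t : ℝ) :
    HasDerivAt (fun t : ℝ ↦ exp (-t ^ 2 / 2)) (-t * exp (-t ^ 2 / 2)) t := by
  have h : HasDerivAt (fun t : ℝ ↦ -t ^ 2 / 2) (-t) t :=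
    ((hasDerivAt_pow 2 t).fun_neg.div_const 2).congr_deriv (by ring)
  exact h.exp.congr_deriv (mul_comm _ _)

theorem integral_Ioi_mul_exp_neg_sq_div_two (x : ℝ) :
    ∫ t in Ioi x, t * exp (-t ^ 2 / 2) = exp (-x ^ 2 / 2) := by
  have hderiv (t : ℝ) (_ : t ∈ Ici x) :
      HasDerivAt (fun t ↦ -exp (-t ^ 2 / 2)) (t * exp (-t ^ 2 / 2)) t :=
    (hasDerivAt_exp_neg_sq_div_two t).neg.congr_deriv (by ring)
  rw [integral_Ioi_eq_neg_of_hasDerivAt_of_integrableOn hderiv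
    integrable_exp_neg_sq_div_two.neg.integrableOn integrable_mul_exp_neg_sq_div_two.integrableOn,
    neg_neg]

theorem integral_Ioi_sq_mul_exp_neg_sq_div_two (x : ℝ) :
    ∫ t in Ioi x, t ^ 2 * exp (-t ^ 2 / 2) =
      x * exp (-x ^ 2 / 2) + ∫ t in Ioi x, exp (-t ^ 2 / 2) := by
  have hderiv (t : ℝ) (_ : t ∈ Ici x) :
      HasDerivAt (fun t ↦ -(t * exp (-t ^ 2 / 2)))
        (t ^ 2 * exp (-t ^ 2 / 2) - exp (-t ^ 2 / 2)) t :=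
    ((hasDerivAt_id t).mul (hasDerivAt_exp_neg_sq_div_two t)).neg.congr_deriv
      (by simp only [id_eq, one_mul]; ring)
  have hsq := (integrable_pow_mul_exp_neg_sq_div_two 2).integrableOn (s := Ioi x)
  have hexp := integrable_exp_neg_sq_div_two.integrableOn (s := Ioi x)
  have h := integral_Ioi_eq_neg_of_hasDerivAt_of_integrableOn hderiv
    integrable_mul_exp_neg_sq_div_two.neg.integrableOn (hsq.sub hexp)
  rw [integral_sub hsq hexp, neg_neg] at h
  linarith

theorem Qf_eq_mul_integral (x : ℝ) :
    Qf x = 1 / √(2 * π) * ∫ t in Ioi x, exp (-t ^ 2 / 2) :=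
  integral_const_mul _ _

theorem mul_Qf_le (x : ℝ) : x * Qf x ≤ 1 / √(2 * π) * exp (-x ^ 2 / 2) := by
  rw [Qf_eq_mul_integral, mul_left_comm, ← integral_Ioi_mul_exp_neg_sq_div_two,
    ← integral_const_mul]
  refine mul_le_mul_of_nonneg_left ?_ (by positivity)
  refine setIntegral_mono_on (integrable_exp_neg_sq_div_two.integrableOn.const_mul x)
    integrable_mul_exp_neg_sq_div_two.integrableOn measurableSet_Ioi fun t ht ↦ ?_
  exact mul_le_mul_of_nonneg_right (le_of_lt ht) (exp_pos _).le

theorem setIntegral_Iio_zero_gaussian_mul_add_sq_div_two (x L : ℝ) :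
    ∫ y in Iio (0 : ℝ), 1 / √(2 * π) * exp (-(y - x) ^ 2 / 2) * (L + y ^ 2 / 2) =
      L * Qf x + x ^ 2 / 2 * Qf x + 1 / 2 * Qf x -
        x / 2 * (1 / √(2 * π) * exp (-x ^ 2 / 2)) := by
  set c := 1 / √(2 * π)
  have hshift := setIntegral_Iio_sub_eq_setIntegral_Ioi_comp_sub_left
    (fun y ↦ c * exp (-(y - x) ^ 2 / 2) * (L + y ^ 2 / 2)) x x
  have hexpand : (fun t ↦ c * exp (-(x - t - x) ^ 2 / 2) * (L + (x - t) ^ 2 / 2)) =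
      fun t ↦ c * (L + x ^ 2 / 2) * exp (-t ^ 2 / 2) - c * x * (t * exp (-t ^ 2 / 2)) +
        c / 2 * (t ^ 2 * exp (-t ^ 2 / 2)) := by
    funext t
    rw [sub_sub_cancel_left, neg_sq]
    ring
  have h0 := integrable_exp_neg_sq_div_two.integrableOn (s := Ioi x)
  have h1 := integrable_mul_exp_neg_sq_div_two.integrableOn (s := Ioi x)
  have h2 := (integrable_pow_mul_exp_neg_sq_div_two 2).integrableOn (s := Ioi x)
  rw [sub_self] at hshift
  rw [hshift, hexpand, integral_add, integral_sub, integral_const_mul, integral_const_mul,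
    integral_const_mul, integral_Ioi_mul_exp_neg_sq_div_two, integral_Ioi_sq_mul_exp_neg_sq_div_two,
    Qf_eq_mul_integral]
  · ring
  · exact h0.const_mul _
  · exact h1.const_mul _
  · exact (h0.const_mul _).sub (h1.const_mul _)
  · exact h2.const_mul _

theorem stmt14 (x : ℝ) (hx : 0 ≤ x) :
    (∫ y in Set.Iio (0:ℝ),
        (1 / Real.sqrt (2 * Real.pi)) * Real.exp (-(y - x) ^ 2 / 2) *
          (Real.log (Real.sqrt (2 * Real.pi)) + y ^ 2 / 2)) =
      Real.log (Real.sqrt (2 * Real.pi)) * Qf x + x ^ 2 / 2 * Qf x + 1 / 2 * Qf x -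
        x / 2 * ((1 / Real.sqrt (2 * Real.pi)) * Real.exp (-x ^ 2 / 2)) ∧
    (∫ y in Set.Iio (0:ℝ),
        (1 / Real.sqrt (2 * Real.pi)) * Real.exp (-(y - x) ^ 2 / 2) *
          (Real.log (Real.sqrt (2 * Real.pi)) + y ^ 2 / 2)) ≤
      (Real.log (Real.sqrt (2 * Real.pi)) + 1 / 2) * Qf x := by
  rw [setIntegral_Iio_zero_gaussian_mul_add_sq_div_two]
  refine ⟨rfl, ?_⟩
  have hmills := mul_le_mul_of_nonneg_left (mul_Qf_le x) hx
  linarith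
end

section
/- For any random variable X taking values in [0, A] and Y = X + Z with Z standard Gaussian independent of X, ∫₀^A f_Y(y)·y dy ≤ E[X] + (1/√(2π))(1 − e^{−A²/2}), where f_Y is the density of Y. -/
/-!
Split `y = (y - x) + x` under the density `φ(y - x)`. Since `φ'(t) = -t φ(t)`, the first
part integrates exactly to `φ(x) - φ(A - x) ≤ φ(0) - φ(A)` for `x ∈ [0, A]`, and the second
is at most `x` because `φ(· - x)` is a probability density. Fubini then turns the pointwise
bound into one in expectation.
-/

open MeasureTheory Real Set
open scoped NNReal

lemma abs_le_max_abs_abs_of_mem_uIoc {G : Type*} [AddCommGroup G] [LinearOrder G]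
    [IsOrderedAddMonoid G] {a b x : G} (hx : x ∈ uIoc a b) : |x| ≤ max |a| |b| := by
  rcases mem_uIoc.mp hx with ⟨hax, hxb⟩ | ⟨hbx, hxa⟩
  · exact abs_le_max_abs_abs hax.le hxb
  · exact max_comm |a| |b| ▸ abs_le_max_abs_abs hbx.le hxa

namespace ProbabilityTheory

lemma gaussianPDFReal_one_apply (m y : ℝ) :
    gaussianPDFReal m 1 y = 1 / √(2 * π) * exp (-(y - m) ^ 2 / 2) := by
  simp [gaussianPDFReal]

lemma gaussianPDFReal_le (m : ℝ) (v : ℝ≥0) (y : ℝ) :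
    gaussianPDFReal m v y ≤ (√(2 * π * v))⁻¹ := by
  rw [gaussianPDFReal]
  refine mul_le_of_le_one_right (by positivity) (exp_le_one_iff.mpr ?_)
  exact div_nonpos_of_nonpos_of_nonneg (neg_nonpos.mpr (sq_nonneg _)) (by positivity)

lemma hasDerivAt_gaussianPDFReal (m : ℝ) (v : ℝ≥0) (y : ℝ) :
    HasDerivAt (gaussianPDFReal m v) (-(y - m) / v * gaussianPDFReal m v y) y := by
  have hexponent : HasDerivAt (fun y ↦ -(y - m) ^ 2 / (2 * v)) (-(y - m) / v) y := by
    refine ((((hasDerivAt_id y).sub_const m).pow 2).neg.div_const _).congr_deriv ?_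
    simp only [id]
    ring
  rw [gaussianPDFReal_def]
  exact (hexponent.exp.const_mul _).congr_deriv (by ring)

@[fun_prop]
lemma continuous_gaussianPDFReal (m : ℝ) (v : ℝ≥0) : Continuous (gaussianPDFReal m v) :=
  continuous_iff_continuousAt.mpr fun y ↦ (hasDerivAt_gaussianPDFReal m v y).continuousAt

lemma integral_gaussianPDFReal_mul_sub (m : ℝ) (v : ℝ≥0) (a b : ℝ) :
    ∫ y in a..b, gaussianPDFReal m v y * (y - m) =
      v * (gaussianPDFReal m v a - gaussianPDFReal m v b) := by
  rcases eq_or_ne v 0 with rfl | hv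
  · simp
  have hderiv (y : ℝ) : HasDerivAt (fun y ↦ -v * gaussianPDFReal m v y)
      (gaussianPDFReal m v y * (y - m)) y := by
    refine ((hasDerivAt_gaussianPDFReal m v y).const_mul (-v : ℝ)).congr_deriv ?_
    field_simp [NNReal.coe_ne_zero.mpr hv]
  rw [intervalIntegral.integral_eq_sub_of_hasDerivAt (fun y _ ↦ hderiv y)
    ((by fun_prop : Continuous _).intervalIntegrable _ _)]
  ring

lemma intervalIntegral_gaussianPDFReal_le_one (m : ℝ) (v : ℝ≥0) {a b : ℝ} (hab : a ≤ b) :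
    ∫ y in a..b, gaussianPDFReal m v y ≤ 1 := by
  rcases eq_or_ne v 0 with rfl | hv
  · simp
  rw [intervalIntegral.integral_of_le hab, ← integral_gaussianPDFReal_eq_one m hv]
  exact setIntegral_le_integral (integrable_gaussianPDFReal m v)
    (.of_forall (gaussianPDFReal_nonneg m v))

lemma intervalIntegral_gaussianPDFReal_mul_id_le {m A : ℝ} (hm : m ∈ Icc 0 A) :
    ∫ y in 0..A, gaussianPDFReal m 1 y * y ≤ m + 1 / √(2 * π) * (1 - exp (-A ^ 2 / 2)) := by
  have hsplit : (fun y ↦ gaussianPDFReal m 1 y * y) =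
      fun y ↦ gaussianPDFReal m 1 y * (y - m) + m * gaussianPDFReal m 1 y := by
    ext y
    ring
  have hmass : m * ∫ y in 0..A, gaussianPDFReal m 1 y ≤ m :=
    mul_le_of_le_one_right hm.1 <|
      intervalIntegral_gaussianPDFReal_le_one m 1 (hm.1.trans hm.2)
  have hboundary : gaussianPDFReal m 1 0 - gaussianPDFReal m 1 A ≤
      1 / √(2 * π) * (1 - exp (-A ^ 2 / 2)) := by
    have hleft : exp (-(0 - m) ^ 2 / 2) ≤ 1 := exp_le_one_iff.mpr (by nlinarith)
    have hright : exp (-A ^ 2 / 2) ≤ exp (-(A - m) ^ 2 / 2) :=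
      exp_le_exp.mpr (by nlinarith [hm.1, hm.2])
    rw [gaussianPDFReal_one_apply, gaussianPDFReal_one_apply, ← mul_sub]
    gcongr
  rw [hsplit, intervalIntegral.integral_add
      ((by fun_prop : Continuous _).intervalIntegrable _ _)
      ((by fun_prop : Continuous _).intervalIntegrable _ _),
    intervalIntegral.integral_const_mul, integral_gaussianPDFReal_mul_sub, NNReal.coe_one,
    one_mul]
  linarith

lemma intervalIntegral_integral_gaussianPDFReal_mul_id {Ω : Type*} [MeasurableSpace Ω]
    (μ : Measure Ω) [IsFiniteMeasure μ] {X : Ω → ℝ} (hX : Measurable X) (v : ℝ≥0)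
    (a b : ℝ) :
    ∫ y in a..b, (∫ ω, gaussianPDFReal (X ω) v y ∂μ) * y =
      ∫ ω, (∫ y in a..b, gaussianPDFReal (X ω) v y * y) ∂μ := by
  simp_rw [← integral_mul_const]
  have : IsFiniteMeasure (volume.restrict (uIoc a b)) :=
    isFiniteMeasure_restrict.mpr measure_Ioc_lt_top.ne
  refine intervalIntegral_integral_swap <|
    Integrable.of_bound ?_ ((√(2 * π * v))⁻¹ * max |a| |b|) ?_
  · have hmeas : Measurable fun p : ℝ × Ω ↦ gaussianPDFReal (X p.2) v p.1 * p.1 :=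
      (measurable_uncurry_gaussianPDFReal.comp
        ((hX.comp measurable_snd).prodMk (measurable_const.prodMk measurable_fst))).mul
        measurable_fst
    exact hmeas.aestronglyMeasurable
  · have hmem := Measure.quasiMeasurePreserving_fst (ν := μ).ae
      (ae_restrict_mem (μ := volume) (measurableSet_uIoc (a := a) (b := b)))
    filter_upwards [hmem] with p hp
    change ‖gaussianPDFReal (X p.2) v p.1 * p.1‖ ≤ _
    rw [norm_mul, Real.norm_of_nonneg (gaussianPDFReal_nonneg _ _ _)]
    exact mul_le_mul (gaussianPDFReal_le _ _ _) (abs_le_max_abs_abs_of_mem_uIoc hp)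
      (abs_nonneg _) (by positivity)

end ProbabilityTheory

open ProbabilityTheory

theorem stmt16 {Ω : Type*} [MeasurableSpace Ω] (μ : Measure Ω) [IsProbabilityMeasure μ]
    (A : ℝ) (hA : 0 < A) (X : Ω → ℝ) (hX : Measurable X)
    (hb : ∀ᵐ ω ∂μ, X ω ∈ Set.Icc 0 A) :
    (∫ y in (0:ℝ)..A,
        (∫ ω, (1 / Real.sqrt (2 * Real.pi)) * Real.exp (-(y - X ω) ^ 2 / 2) ∂μ) * y) ≤
      (∫ ω, X ω ∂μ) + (1 / Real.sqrt (2 * Real.pi)) * (1 - Real.exp (-A ^ 2 / 2)) := by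
  have hXint : Integrable X μ := .of_mem_Icc 0 A hX.aemeasurable hb
  simp_rw [← gaussianPDFReal_one_apply]
  rw [intervalIntegral_integral_gaussianPDFReal_mul_id μ hX]
  calc _ ≤ ∫ ω, (X ω + 1 / √(2 * π) * (1 - exp (-A ^ 2 / 2))) ∂μ := by
        refine integral_mono_of_nonneg ?_ (hXint.add (integrable_const _)) ?_
        · exact .of_forall fun ω ↦ intervalIntegral.integral_nonneg hA.le fun y hy ↦
            mul_nonneg (gaussianPDFReal_nonneg _ _ _) hy.1
        · filter_upwards [hb] with ω hω
          exact intervalIntegral_gaussianPDFReal_mul_id_le hω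
    _ = _ := by
        rw [integral_add hXint (integrable_const _), integral_const, probReal_univ, one_smul]
end
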